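/- Every tree is a veto interval graph. -/

import Mathlib

/-- A veto interval: a closed interval `[l, r]` with a veto mark `v`, `l < v < r`. -/
structure VetoInterval where
  l : ℝ
  v : ℝ
  r : ℝ
  hlv : l < v
  hvr : v < r

/-- Two veto intervals are adjacent iff they intersect and neither contains
the veto mark of the other. -/
def VIAdj (a b : VetoInterval) : Prop :=
  (a.v < b.l ∧ b.l < a.r ∧ a.r < b.v) ∨ (b.v < a.l ∧ a.l < b.r ∧ b.r < a.v)

/-- `G` is a veto interval graph. -/
def IsVIGraph {V : Type*} (G : SimpleGraph V) : Prop :=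
  ∃ f : V → VetoInterval, ∀ a b : V, G.Adj a b ↔ VIAdj (f a) (f b)

/-!
Root the tree at `u` and number the vertices injectively by `p : V → ℕ` so that every parent gets
a smaller number than its children (breadth-first: `p x = n * dist u x + index x`). Give `x` the
veto mark `3 p x`, the right end `3 p x + 2`, and let its left end sit at `3 p (parent x) + 1`,
just inside the window `(3 p a, 3 p a + 2)` of its parent `a` (the root's left end `-2` lies in no
window). The left end of `b` then lies in the window of `a` exactly when `a` is the parent of `b`,
and the remaining inequality `3 p a + 2 < 3 p b` is automatic.
-/

namespace VetoInterval

def ofInt (p q : ℤ) (h : q < p) : VetoInterval where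
  l := 3 * q + 1
  v := 3 * p
  r := 3 * p + 2
  hlv := by
    have : (q : ℝ) + 1 ≤ p := by exact_mod_cast h
    linarith
  hvr := by linarith

theorem viAdj_ofInt_iff {p q p' q' : ℤ} (h : q < p) (h' : q' < p') :
    VIAdj (ofInt p q h) (ofInt p' q' h') ↔ q' = p ∨ q = p' := by
  simp only [VIAdj, ofInt]
  norm_cast
  omega

end VetoInterval

theorem isVIGraph_of_adj_iff {V : Type*} {G : SimpleGraph V} (p q : V → ℤ)
    (hqp : ∀ x, q x < p x) (hadj : ∀ a b, G.Adj a b ↔ q b = p a ∨ q a = p b) : IsVIGraph G :=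
  ⟨fun x => .ofInt (p x) (q x) (hqp x), fun a b => by rw [hadj, VetoInterval.viAdj_ofInt_iff]⟩

theorem isVIGraph_of_parent {V : Type*} [Fintype V] {G : SimpleGraph V} (u : V) (par : V → V)
    (d : V → ℕ) (hd : ∀ b ≠ u, d (par b) < d b)
    (hadj : ∀ a b, G.Adj a b ↔ (b ≠ u ∧ par b = a) ∨ (a ≠ u ∧ par a = b)) : IsVIGraph G := by
  classical
  let e := Fintype.equivFin V
  let p : V → ℕ := fun x => Fintype.card V * d x + e x
  have hp : p.Injective := fun a b hab => e.injective <| Fin.ext <| by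
    simpa [p, Nat.mul_add_mod, Nat.mod_eq_of_lt] using congrArg (· % Fintype.card V) hab
  have hp_par : ∀ b ≠ u, p (par b) < p b := fun b hb => by
    have hmul := Nat.mul_le_mul_left (Fintype.card V) (Nat.succ_le_of_lt (hd b hb))
    have hlt := (e (par b)).isLt
    rw [Nat.mul_succ] at hmul
    simp only [p]
    omega
  let q : V → ℤ := fun x => if x = u then -1 else p (par x)
  have hq : ∀ a b, q b = p a ↔ b ≠ u ∧ par b = a := fun a b => by
    by_cases hb : b = u <;> simp [q, hb, hp.eq_iff]
  refine isVIGraph_of_adj_iff (fun x => (p x : ℤ)) q (fun x => ?_)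
    (fun a b => by rw [hadj, hq, hq])
  by_cases hx : x = u
  · simp only [q, if_pos hx]
    omega
  · simpa [q, hx] using hp_par x hx

namespace SimpleGraph

theorem Reachable.exists_adj_dist_add_one {V : Type*} {G : SimpleGraph V} {u b : V}
    (h : G.Reachable u b) (hb : u ≠ b) : ∃ a, G.Adj a b ∧ G.dist u a + 1 = G.dist u b := by
  obtain ⟨p, -, hp⟩ := h.exists_path_of_dist
  have hnil : ¬p.Nil := Walk.not_nil_of_ne hb
  refine ⟨p.penultimate, p.adj_penultimate hnil, ?_⟩
  have hdrop := dist_le p.dropLast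
  have hlen := Walk.length_dropLast_add_one hnil
  have hdiff := (p.adj_penultimate hnil).diff_dist_adj (u := u)
  omega

theorem IsAcyclic.eq_of_adj_of_dist_add_one {V : Type*} {G : SimpleGraph V} (hG : G.IsAcyclic)
    {u a a' b : V} (ha : G.Adj a b) (ha' : G.Adj a' b) (hd : G.dist u a + 1 = G.dist u b)
    (hd' : G.dist u a' + 1 = G.dist u b) : a = a' := by
  have hreach : G.Reachable u b := Reachable.of_dist_ne_zero (by omega)
  obtain ⟨q, hq⟩ := (hreach.trans ha.symm.reachable).exists_walk_length_eq_dist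
  obtain ⟨q', hq'⟩ := (hreach.trans ha'.symm.reachable).exists_walk_length_eq_dist
  have hpath : (q.concat ha).IsPath :=
    (q.concat ha).isPath_of_length_eq_dist (by rw [Walk.length_concat]; omega)
  have hpath' : (q'.concat ha').IsPath :=
    (q'.concat ha').isPath_of_length_eq_dist (by rw [Walk.length_concat]; omega)
  have hsame := congrArg (fun w : G.Path u b => w.1.penultimate)
    ((hG.subsingleton_path u b).elim ⟨_, hpath⟩ ⟨_, hpath'⟩)
  simpa [Walk.penultimate_concat] using hsame

theorem IsTree.exists_parent {V : Type*} {G : SimpleGraph V} (hG : G.IsTree) (u : V) :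
    ∃ par : V → V, (∀ b ≠ u, G.dist u (par b) < G.dist u b) ∧
      ∀ a b, G.Adj a b ↔ (b ≠ u ∧ par b = a) ∨ (a ≠ u ∧ par a = b) := by
  have hex : ∀ b ≠ u, ∃ a, G.Adj a b ∧ G.dist u a + 1 = G.dist u b :=
    fun b hb => (hG.connected u b).exists_adj_dist_add_one (Ne.symm hb)
  choose! par hpar_adj hpar_dist using hex
  have hpar_eq : ∀ {a b}, G.Adj a b → G.dist u a + 1 = G.dist u b → b ≠ u ∧ par b = a :=
    fun {a b} hab hd => by
      have hb : b ≠ u := by rintro rfl; simp at hd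
      exact ⟨hb, hG.isAcyclic.eq_of_adj_of_dist_add_one (hpar_adj b hb) hab (hpar_dist b hb) hd⟩
  refine ⟨par, fun b hb => by have := hpar_dist b hb; omega, fun a b => ⟨fun hab => ?_, ?_⟩⟩
  · rcases hG.dist_eq_dist_add_one_of_adj u hab with hd | hd
    · exact .inr (hpar_eq hab.symm hd.symm)
    · exact .inl (hpar_eq hab hd.symm)
  · rintro (⟨hb, rfl⟩ | ⟨ha, rfl⟩)
    · exact hpar_adj b hb
    · exact (hpar_adj a ha).symm

end SimpleGraph

theorem stmt_5 {V : Type*} [Fintype V] (G : SimpleGraph V) (h : G.IsTree) :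
    IsVIGraph G := by
  obtain ⟨u⟩ := h.connected.nonempty
  obtain ⟨par, hdist, hadj⟩ := h.exists_parent u
  exact isVIGraph_of_parent u par (G.dist u) hdist hadj
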